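/- arXiv:2105.06821 — 2 statements merged into one kernel-verified Lean document; each statement's English description precedes it below -/
import Mathlib

section
/- Let α, A, T be positive real numbers, let x ≥ A·√T be real, and let z ∈ ℂ with |z − x| ≤ x/2. Define φ(z) := z^{−α}·(Arsinh(z·√(π/(2T))))^{−1}·(√(T/(2πz²) + 1/4) + 1/2)^{−1}·(T/(2πz²) + 1/4)^{−1/4} and f(z) := z²/2 − √(T·z²/(2π) + z⁴/4) − (T/π)·Arsinh(z·√(π/(2T))), where Arsinh(w) := Log(w + (1 + w²)^{1/2}) and all logarithms, square roots and powers are taken with principal branches. Then |φ(z)| ≤ 2^{α+1/2}·(arsinh((A/2)·√(π/2)))^{−1}·x^{−α}, |f'(z)| ≤ 2T/(π·x), and |f''(z)| ≥ 4T/((8/A² + 9π)·x²). -/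
/-!
Put `b = 2T/π`, `s = √(π/(2T))` and `g(w) = √(b + w²)`. On the sector `|arg w| < π/4`, which
contains the disk `|z - x| ≤ x/2`, the root in `f` is `w g(w)/2` and
`Arsinh(s w) = log (s (w + g(w)))`, so `f' = w - g = -b/(w + g)` and `f'' = 1 - w/g = b/(g (w + g))`.
Since `Re g > Re w ≥ x/2` and `|g|² ≤ b + |w|²`, both derivative bounds follow.
For `φ`, `|Arsinh w| ≥ log |w + √(1 + w²)| ≥ arsinh (Re w)`, and `Re (T/(2πz²)) ≥ 0` bounds the
last two factors by `1` and `√2`.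
-/

open Real

/-- The complex inverse hyperbolic sine (principal branch). -/
noncomputable def CArsinh (w : ℂ) : ℂ := Complex.log (w + (1 + w^2) ^ ((1:ℂ)/2))

namespace Complex

lemma cpow_one_half_sq (ζ : ℂ) : (ζ ^ (1/2 : ℂ)) ^ 2 = ζ := by
  rw [one_div, cpow_ofNat_inv_pow]

lemma cpow_one_half_re (ζ : ℂ) : (ζ ^ (1/2 : ℂ)).re = √((‖ζ‖ + ζ.re) / 2) := by
  rw [one_div, cpow_inv_two_re]

lemma re_cpow_one_half_nonneg (ζ : ℂ) : 0 ≤ (ζ ^ (1/2 : ℂ)).re :=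
  (cpow_one_half_re ζ).symm ▸ Real.sqrt_nonneg _

lemma cpow_one_half_eq_of_sq_eq {ζ y : ℂ} (hsq : y ^ 2 = ζ) (hy : 0 < y.re) :
    ζ ^ (1/2 : ℂ) = y := by
  have hprod : (ζ ^ (1/2 : ℂ) - y) * (ζ ^ (1/2 : ℂ) + y) = 0 := by
    linear_combination cpow_one_half_sq ζ - hsq
  refine sub_eq_zero.mp ((mul_eq_zero.mp hprod).resolve_right fun h => ?_)
  have := congrArg re h
  rw [add_re, zero_re] at this
  linarith [re_cpow_one_half_nonneg ζ]

lemma half_le_re_cpow_one_half {ζ : ℂ} (h : 1/4 ≤ ζ.re) : 1/2 ≤ (ζ ^ (1/2 : ℂ)).re := by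
  rw [cpow_one_half_re]
  apply Real.le_sqrt_of_sq_le
  linarith [re_le_norm ζ]

lemma norm_inv_cpow_one_half_add_half_le_one {ζ : ℂ} (h : 1/4 ≤ ζ.re) :
    ‖(ζ ^ (1/2 : ℂ) + 1/2)⁻¹‖ ≤ 1 := by
  have hre : 1 ≤ (ζ ^ (1/2 : ℂ) + 1/2).re := by
    rw [add_re, div_ofNat_re, one_re]
    linarith [half_le_re_cpow_one_half h]
  rw [norm_inv]
  exact inv_le_one_of_one_le₀ (hre.trans (re_le_norm _))

lemma norm_cpow_neg_le {α r : ℝ} {z : ℂ} (hα : 0 ≤ α) (hr : 0 < r) (hz : r ≤ ‖z‖) :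
    ‖z ^ (-(α:ℂ))‖ ≤ r ^ (-α) := by
  rw [← ofReal_neg, norm_cpow_real]
  exact Real.rpow_le_rpow_of_nonpos hr hz (neg_nonpos.mpr hα)

lemma norm_cpow_neg_quarter_le {ζ : ℂ} (h : 1/4 ≤ ζ.re) :
    ‖ζ ^ (-(1:ℂ)/4)‖ ≤ (2:ℝ) ^ (1/2 : ℝ) := by
  rw [show (-(1:ℂ)/4) = -((1/4 : ℝ) : ℂ) by push_cast; ring]
  refine (norm_cpow_neg_le (by norm_num) (by norm_num) (h.trans (re_le_norm ζ))).trans_eq ?_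
  rw [show (1/4 : ℝ) = 2 ^ (-2 : ℝ) by norm_num [Real.rpow_neg], ← Real.rpow_mul (by norm_num)]
  norm_num

lemma re_ofReal_div_nonneg {c : ℝ} (hc : 0 ≤ c) {ζ : ℂ} (hζ : 0 ≤ ζ.re) :
    0 ≤ ((c : ℂ) / ζ).re := by
  rw [div_re, ofReal_re, ofReal_im, zero_mul, zero_div, add_zero]
  exact div_nonneg (mul_nonneg hc hζ) (normSq_nonneg ζ)

end Complex

/-- The open sector `|arg w| < π/4`. -/
def rightAngleSector : Set ℂ := {w | |w.im| < w.re}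

lemma isOpen_rightAngleSector : IsOpen rightAngleSector :=
  isOpen_lt Complex.continuous_im.abs Complex.continuous_re

section rightAngleSector

variable {w y : ℂ}

lemma re_pos_of_mem_rightAngleSector (hw : w ∈ rightAngleSector) : 0 < w.re :=
  (abs_nonneg _).trans_lt hw

lemma re_sq_pos_of_mem_rightAngleSector (hw : w ∈ rightAngleSector) : 0 < (w ^ 2).re := by
  have := abs_lt.mp (show |w.im| < w.re from hw)
  rw [sq, Complex.mul_re]
  nlinarith

lemma re_mul_pos_of_mem_rightAngleSector (hw : w ∈ rightAngleSector)
    (hy : y ∈ rightAngleSector) : 0 < (w * y).re := by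
  have : |w.im * y.im| < w.re * y.re := by
    rw [abs_mul]
    exact mul_lt_mul'' hw hy (abs_nonneg _) (abs_nonneg _)
  rw [Complex.mul_re]
  linarith [le_abs_self (w.im * y.im)]

end rightAngleSector

section disk

variable {x : ℝ} {z : ℂ}

lemma half_le_re_of_norm_sub_le (hz : ‖z - x‖ ≤ x / 2) : x / 2 ≤ z.re := by
  have := (abs_le.mp ((Complex.abs_re_le_norm _).trans hz)).1
  rw [Complex.sub_re, Complex.ofReal_re] at this
  linarith

lemma norm_le_of_norm_sub_le (hz : ‖z - x‖ ≤ x / 2) : ‖z‖ ≤ 3 * x / 2 := by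
  have hx : 0 ≤ x := by linarith [norm_nonneg (z - x)]
  calc ‖z‖ ≤ ‖z - x‖ + ‖(x : ℂ)‖ := norm_le_norm_sub_add z x
    _ ≤ x / 2 + x := by rw [Complex.norm_real, Real.norm_of_nonneg hx]; linarith
    _ = 3 * x / 2 := by ring

lemma mem_rightAngleSector_of_norm_sub_le (hx : 0 < x) (hz : ‖z - x‖ ≤ x / 2) :
    z ∈ rightAngleSector := by
  have hre := half_le_re_of_norm_sub_le hz
  have hsq : (z.re - x) ^ 2 + z.im ^ 2 ≤ (x / 2) ^ 2 := by
    have := pow_le_pow_left₀ (norm_nonneg _) hz 2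
    rwa [Complex.sq_norm, Complex.normSq_apply, Complex.sub_re, Complex.sub_im, Complex.ofReal_re,
      Complex.ofReal_im, sub_zero, ← sq, ← sq] at this
  show |z.im| < z.re
  refine abs_lt_of_sq_lt_sq ?_ (by linarith)
  nlinarith [sq_nonneg (z.re - x / 2)]

end disk

noncomputable def sqrtAddSq (b : ℝ) (w : ℂ) : ℂ := ((b : ℂ) + w ^ 2) ^ (1/2 : ℂ)

section sqrtAddSq

variable {b : ℝ} {w : ℂ}

lemma sqrtAddSq_sq (b : ℝ) (w : ℂ) : sqrtAddSq b w ^ 2 = b + w ^ 2 :=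
  Complex.cpow_one_half_sq _

lemma sqrtAddSq_re_sq_sub_im_sq (b : ℝ) (w : ℂ) :
    (sqrtAddSq b w).re ^ 2 - (sqrtAddSq b w).im ^ 2 = b + w.re ^ 2 - w.im ^ 2 := by
  have := congrArg Complex.re (sqrtAddSq_sq b w)
  simp only [sq, Complex.mul_re, Complex.add_re, Complex.ofReal_re] at this ⊢
  linarith

lemma sqrtAddSq_re_mul_im (b : ℝ) (w : ℂ) :
    (sqrtAddSq b w).re * (sqrtAddSq b w).im = w.re * w.im := by
  have := congrArg Complex.im (sqrtAddSq_sq b w)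
  simp only [sq, Complex.mul_im, Complex.add_im, Complex.ofReal_im] at this
  linarith

lemma re_lt_re_sqrtAddSq (hb : 0 < b) (hw : 0 < w.re) : w.re < (sqrtAddSq b w).re := by
  have e₁ := sqrtAddSq_re_sq_sub_im_sq b w
  have e₂ := sqrtAddSq_re_mul_im b w
  set a := (sqrtAddSq b w).re
  set c := (sqrtAddSq b w).im
  have ha : 0 < a := by
    refine (show 0 ≤ a from Complex.re_cpow_one_half_nonneg _).lt_of_ne' fun ha => ?_
    have hv : w.im = 0 := by
      rw [ha, zero_mul] at e₂
      exact (mul_eq_zero.mp e₂.symm).resolve_left hw.ne'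
    nlinarith
  have key : (a ^ 2 - w.re ^ 2) * (a ^ 2 + w.im ^ 2) = a ^ 2 * b := by
    linear_combination a ^ 2 * e₁ + (a * c + w.re * w.im) * e₂
  have : w.re ^ 2 < a ^ 2 := by
    by_contra! h
    have := mul_nonpos_of_nonpos_of_nonneg (sub_nonpos.mpr h) (by positivity : 0 ≤ a ^ 2 + w.im ^ 2)
    nlinarith [mul_pos (pow_pos ha 2) hb]
  nlinarith

lemma sqrtAddSq_ne_zero (hb : 0 < b) (hw : 0 < w.re) : sqrtAddSq b w ≠ 0 := fun h => by
  have := re_lt_re_sqrtAddSq hb hw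
  rw [h, Complex.zero_re] at this
  linarith

lemma two_mul_re_lt_re_add_sqrtAddSq (hb : 0 < b) (hw : 0 < w.re) :
    2 * w.re < (w + sqrtAddSq b w).re := by
  rw [Complex.add_re]
  linarith [re_lt_re_sqrtAddSq hb hw]

lemma sqrtAddSq_mem_rightAngleSector (hb : 0 < b) (hw : w ∈ rightAngleSector) :
    sqrtAddSq b w ∈ rightAngleSector := by
  have hwre := re_pos_of_mem_rightAngleSector hw
  have hlt := re_lt_re_sqrtAddSq hb hwre
  have e₂ := congrArg abs (sqrtAddSq_re_mul_im b w)
  rw [abs_mul, abs_mul, abs_of_pos (hwre.trans hlt), abs_of_pos hwre] at e₂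
  have hw' : |w.im| < w.re := hw
  show |(sqrtAddSq b w).im| < (sqrtAddSq b w).re
  nlinarith [abs_nonneg (sqrtAddSq b w).im]

lemma re_add_sqrt_le_norm_add_sqrtAddSq (hb : 0 < b) (hw : 0 < w.re) :
    w.re + √(b + w.re ^ 2) ≤ ‖w + sqrtAddSq b w‖ := by
  have hau := re_lt_re_sqrtAddSq hb hw
  have e₁ := sqrtAddSq_re_sq_sub_im_sq b w
  have e₂ := sqrtAddSq_re_mul_im b w
  have hnorm : ‖w + sqrtAddSq b w‖ ^ 2 =
      (w.re + (sqrtAddSq b w).re) ^ 2 + (w.im + (sqrtAddSq b w).im) ^ 2 := by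
    rw [Complex.sq_norm, Complex.normSq_apply, Complex.add_re, Complex.add_im]
    ring
  set a := (sqrtAddSq b w).re
  set c := (sqrtAddSq b w).im
  set u := w.re
  set v := w.im
  set k := √(b + u ^ 2)
  have hk : k ^ 2 = b + u ^ 2 := Real.sq_sqrt (by positivity)
  have hk₀ : 0 ≤ k := Real.sqrt_nonneg _
  have ha : 0 < a := hw.trans hau
  -- `ac = uv` with `a > u` gives `|c| ≤ |v|`, hence `a² = k² - v² + c² ≤ k²`
  have hca : c ^ 2 ≤ v ^ 2 := by
    have hsq : c ^ 2 * a ^ 2 = u ^ 2 * v ^ 2 := by linear_combination (a * c + u * v) * e₂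
    refine le_of_mul_le_mul_right ?_ (pow_pos ha 2)
    nlinarith [mul_le_mul_of_nonneg_right (pow_le_pow_left₀ hw.le hau.le 2) (sq_nonneg v)]
  have hak : a ≤ k := (abs_le_of_sq_le_sq' (by nlinarith) hk₀).2
  have hvc : u * k ≤ u * a + v * c := by
    refine le_of_mul_le_mul_right ?_ ha
    have hvca : v * c * a = u * v ^ 2 := by linear_combination v * e₂
    nlinarith [mul_nonneg (mul_nonneg hw.le hk₀) (sub_nonneg.mpr hak), mul_nonneg hw.le (sq_nonneg c)]
  nlinarith [norm_nonneg (w + sqrtAddSq b w)]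

lemma sub_sqrtAddSq_eq (hb : 0 < b) (hw : 0 < w.re) :
    w - sqrtAddSq b w = -b / (w + sqrtAddSq b w) := by
  have hne : w + sqrtAddSq b w ≠ 0 := fun h => by
    have := two_mul_re_lt_re_add_sqrtAddSq hb hw
    rw [h, Complex.zero_re] at this
    linarith
  rw [eq_div_iff hne]
  linear_combination -sqrtAddSq_sq b w

lemma norm_sub_sqrtAddSq_le (hb : 0 < b) (hw : 0 < w.re) :
    ‖w - sqrtAddSq b w‖ ≤ b / (2 * w.re) := by
  have hre := two_mul_re_lt_re_add_sqrtAddSq hb hw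
  rw [sub_sqrtAddSq_eq hb hw, norm_div, norm_neg, Complex.norm_real, Real.norm_of_nonneg hb.le]
  gcongr
  exact hre.le.trans (Complex.re_le_norm _)

lemma le_norm_one_sub_div_sqrtAddSq (hb : 0 < b) (hw : 0 < w.re) :
    b / (2 * ‖w‖ ^ 2 + 3 * b / 2) ≤ ‖1 - w / sqrtAddSq b w‖ := by
  have hg := sqrtAddSq_ne_zero hb hw
  set g := sqrtAddSq b w
  have hsum : 0 < ‖w + g‖ := (mul_pos two_pos hw).trans
    ((two_mul_re_lt_re_add_sqrtAddSq hb hw).trans_le (Complex.re_le_norm _))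
  have hsq : ‖g‖ ^ 2 ≤ b + ‖w‖ ^ 2 := by
    rw [← norm_pow, sqrtAddSq_sq, ← norm_pow]
    refine (norm_add_le _ _).trans_eq ?_
    rw [Complex.norm_real, Real.norm_of_nonneg hb.le]
  -- AM-GM: `‖w‖ ‖g‖ ≤ (‖w‖² + ‖g‖²)/2`
  have hprod : ‖w + g‖ * ‖g‖ ≤ 2 * ‖w‖ ^ 2 + 3 * b / 2 := by
    have := mul_le_mul_of_nonneg_right (norm_add_le w g) (norm_nonneg g)
    nlinarith [sq_nonneg (‖w‖ - ‖g‖)]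
  have heq : 1 - w / g = -(w - g) / g := by field_simp; ring
  rw [heq, sub_sqrtAddSq_eq hb hw, norm_div, norm_neg, norm_div, norm_neg, Complex.norm_real,
    Real.norm_of_nonneg hb.le, div_div]
  gcongr

lemma ofReal_add_sq_mem_slitPlane (hb : 0 < b) (hw : 0 < w.re) :
    (b : ℂ) + w ^ 2 ∈ Complex.slitPlane := by
  rw [Complex.mem_slitPlane_iff]
  by_cases hv : w.im = 0
  · left
    simp only [sq, Complex.add_re, Complex.ofReal_re, Complex.mul_re, hv, mul_zero, sub_zero]
    positivity
  · right
    simp only [sq, Complex.add_im, Complex.ofReal_im, Complex.mul_im]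
    intro h
    exact hv (by nlinarith [mul_self_nonneg w.im])

lemma hasDerivAt_sqrtAddSq (hb : 0 < b) (hw : 0 < w.re) :
    HasDerivAt (sqrtAddSq b) (w / sqrtAddSq b w) w := by
  have hg := sqrtAddSq_ne_zero hb hw
  have hsq : HasDerivAt (fun v : ℂ => (b : ℂ) + v ^ 2) (2 * w) w := by
    simpa using (hasDerivAt_pow 2 w).const_add (b : ℂ)
  refine (hsq.cpow_const (c := 1/2) (ofReal_add_sq_mem_slitPlane hb hw)).congr_deriv ?_
  rw [show (1/2 : ℂ) - 1 = -(1/2) by norm_num, Complex.cpow_neg]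
  unfold sqrtAddSq at hg ⊢
  field_simp

lemma hasDerivAt_log_mul_add_sqrtAddSq {s : ℝ} (hs : 0 < s) (hb : 0 < b) (hw : 0 < w.re) :
    HasDerivAt (fun v => Complex.log (s * (v + sqrtAddSq b v))) (sqrtAddSq b w)⁻¹ w := by
  have hre : 0 < ((s : ℂ) * (w + sqrtAddSq b w)).re := by
    rw [Complex.re_ofReal_mul]
    exact mul_pos hs (by linarith [two_mul_re_lt_re_add_sqrtAddSq hb hw])
  have hsum : w + sqrtAddSq b w ≠ 0 := fun h => by simp [h] at hre
  have hg := sqrtAddSq_ne_zero hb hw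
  have hs' : (s : ℂ) ≠ 0 := Complex.ofReal_ne_zero.mpr hs.ne'
  refine ((((hasDerivAt_id w).add (hasDerivAt_sqrtAddSq hb hw)).const_mul (s : ℂ)).clog
    (Or.inl hre)).congr_deriv ?_
  simp only [Pi.add_apply, id]
  field_simp
  ring

lemma cArsinh_mul_ofReal_eq {s : ℝ} (hs : 0 < s) (hsb : s ^ 2 * b = 1) (hw : 0 < w.re) :
    CArsinh (w * s) = Complex.log (s * (w + sqrtAddSq b w)) := by
  have hb : 0 < b := pos_of_mul_pos_right (hsb ▸ one_pos) (sq_nonneg s)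
  have hroot : (1 + (w * s) ^ 2) ^ (1/2 : ℂ) = s * sqrtAddSq b w := by
    apply Complex.cpow_one_half_eq_of_sq_eq
    · have hsbC : (s : ℂ) ^ 2 * b = 1 := by exact_mod_cast hsb
      rw [mul_pow, sqrtAddSq_sq]
      linear_combination hsbC
    · rw [Complex.re_ofReal_mul]
      exact mul_pos hs (hw.trans (re_lt_re_sqrtAddSq hb hw))
  rw [CArsinh, hroot, mul_add, mul_comm w]

end sqrtAddSq

lemma arsinh_re_le_norm_cArsinh {w : ℂ} (hw : 0 < w.re) : arsinh w.re ≤ ‖CArsinh w‖ := by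
  have hlog : CArsinh w = Complex.log (w + sqrtAddSq 1 w) := by
    rw [CArsinh, sqrtAddSq, Complex.ofReal_one]
  calc arsinh w.re = Real.log (w.re + √(1 + w.re ^ 2)) := rfl
    _ ≤ Real.log ‖w + sqrtAddSq 1 w‖ :=
        Real.log_le_log (by positivity) (re_add_sqrt_le_norm_add_sqrtAddSq one_pos hw)
    _ = (CArsinh w).re := by rw [hlog, Complex.log_re]
    _ ≤ ‖CArsinh w‖ := Complex.re_le_norm _

-- `f` and `φ` of the statement
noncomputable def secondIntegralPhase (T : ℝ) (w : ℂ) : ℂ :=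
  w^2/2 - ((T:ℂ)*w^2/(2*π) + w^4/4) ^ ((1:ℂ)/2) -
    ((T:ℂ)/π) * CArsinh (w * (Real.sqrt (π / (2*T)) : ℝ))

noncomputable def secondIntegralAmplitude (α T : ℝ) (w : ℂ) : ℂ :=
  w ^ (-(α:ℂ)) * (CArsinh (w * (Real.sqrt (π / (2*T)) : ℝ)))⁻¹ *
    (((T:ℂ) / (2*π*w^2) + 1/4) ^ ((1:ℂ)/2) + 1/2)⁻¹ * ((T:ℂ) / (2*π*w^2) + 1/4) ^ (-(1:ℂ)/4)

section secondIntegralPhase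

variable {T : ℝ} {w : ℂ}

lemma sq_sqrt_pi_div_mul (hT : 0 < T) : √(π / (2 * T)) ^ 2 * (2 * T / π) = 1 := by
  rw [Real.sq_sqrt (by positivity)]
  field_simp

lemma secondIntegralPhase_eq (hT : 0 < T) (hw : w ∈ rightAngleSector) :
    secondIntegralPhase T w = w ^ 2 / 2 - w / 2 * sqrtAddSq (2 * T / π) w -
      T / π * Complex.log (√(π / (2 * T)) * (w + sqrtAddSq (2 * T / π) w)) := by
  have hb : 0 < 2 * T / π := by positivity
  have hroot : ((T:ℂ) * w ^ 2 / (2 * π) + w ^ 4 / 4) ^ (1/2 : ℂ) =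
      w / 2 * sqrtAddSq (2 * T / π) w := by
    apply Complex.cpow_one_half_eq_of_sq_eq
    · rw [mul_pow, sqrtAddSq_sq]
      push_cast
      field_simp
      ring
    · rw [div_mul_eq_mul_div, Complex.div_ofNat_re]
      exact half_pos (re_mul_pos_of_mem_rightAngleSector hw
        (sqrtAddSq_mem_rightAngleSector hb hw))
  rw [secondIntegralPhase, hroot, cArsinh_mul_ofReal_eq (Real.sqrt_pos.mpr (by positivity))
    (sq_sqrt_pi_div_mul hT) (re_pos_of_mem_rightAngleSector hw)]

lemma hasDerivAt_secondIntegralPhase (hT : 0 < T) (hw : w ∈ rightAngleSector) :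
    HasDerivAt (secondIntegralPhase T) (w - sqrtAddSq (2 * T / π) w) w := by
  have hb : 0 < 2 * T / π := by positivity
  have hwre := re_pos_of_mem_rightAngleSector hw
  have hg := sqrtAddSq_ne_zero hb hwre
  have hπ : (π : ℂ) ≠ 0 := Complex.ofReal_ne_zero.mpr pi_ne_zero
  have hsquare : HasDerivAt (fun v : ℂ => v ^ 2 / 2) w w := by
    simpa using (hasDerivAt_pow 2 w).div_const 2
  have hprod := ((hasDerivAt_id w).div_const 2).mul (hasDerivAt_sqrtAddSq hb hwre)
  have hlog := (hasDerivAt_log_mul_add_sqrtAddSq (s := √(π / (2 * T)))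
    (Real.sqrt_pos.mpr (by positivity)) hb hwre).const_mul ((T : ℂ) / π)
  have heq : secondIntegralPhase T =ᶠ[nhds w] fun v => v ^ 2 / 2 - v / 2 * sqrtAddSq (2 * T / π) v -
      T / π * Complex.log (√(π / (2 * T)) * (v + sqrtAddSq (2 * T / π) v)) :=
    Filter.eventually_of_mem (isOpen_rightAngleSector.mem_nhds hw)
      fun v hv => secondIntegralPhase_eq hT hv
  refine ((hsquare.sub hprod).sub hlog).congr_of_eventuallyEq heq |>.congr_deriv ?_
  have hsq := sqrtAddSq_sq (2 * T / π) w
  push_cast at hsq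
  field_simp at hsq
  simp only [id]
  field_simp
  linear_combination hsq

lemma deriv_secondIntegralPhase (hT : 0 < T) (hw : w ∈ rightAngleSector) :
    deriv (secondIntegralPhase T) w = w - sqrtAddSq (2 * T / π) w :=
  (hasDerivAt_secondIntegralPhase hT hw).deriv

lemma iteratedDeriv_two_secondIntegralPhase (hT : 0 < T) (hw : w ∈ rightAngleSector) :
    iteratedDeriv 2 (secondIntegralPhase T) w = 1 - w / sqrtAddSq (2 * T / π) w := by
  have hderiv : deriv (secondIntegralPhase T) =ᶠ[nhds w] fun v => v - sqrtAddSq (2 * T / π) v :=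
    Filter.eventually_of_mem (isOpen_rightAngleSector.mem_nhds hw)
      fun v hv => deriv_secondIntegralPhase hT hv
  rw [iteratedDeriv_succ, iteratedDeriv_one, hderiv.deriv_eq]
  exact ((hasDerivAt_id w).sub (hasDerivAt_sqrtAddSq (by positivity)
    (re_pos_of_mem_rightAngleSector hw))).deriv

end secondIntegralPhase

section bounds

variable {α A T x : ℝ} {z : ℂ}

lemma norm_deriv_secondIntegralPhase_le (hT : 0 < T) (hx : 0 < x) (hz : ‖z - x‖ ≤ x / 2) :
    ‖deriv (secondIntegralPhase T) z‖ ≤ 2 * T / (π * x) := by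
  have hre := half_le_re_of_norm_sub_le hz
  rw [deriv_secondIntegralPhase hT (mem_rightAngleSector_of_norm_sub_le hx hz)]
  calc _ ≤ 2 * T / π / (2 * z.re) := norm_sub_sqrtAddSq_le (by positivity) (by linarith)
    _ ≤ 2 * T / π / x := by gcongr; linarith
    _ = 2 * T / (π * x) := by rw [div_div]

lemma le_norm_iteratedDeriv_two_secondIntegralPhase (hA : 0 < A) (hT : 0 < T)
    (hx : A * √T ≤ x) (hz : ‖z - x‖ ≤ x / 2) :
    4 * T / ((8/A^2 + 9*π) * x^2) ≤ ‖iteratedDeriv 2 (secondIntegralPhase T) z‖ := by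
  have hx₀ : 0 < x := lt_of_lt_of_le (by positivity) hx
  have hAx : A ^ 2 * T ≤ x ^ 2 := by
    have := pow_le_pow_left₀ (by positivity) hx 2
    rwa [mul_pow, Real.sq_sqrt hT.le] at this
  have hz₂ := norm_le_of_norm_sub_le hz
  rw [iteratedDeriv_two_secondIntegralPhase hT (mem_rightAngleSector_of_norm_sub_le hx₀ hz)]
  refine le_trans ?_ (le_norm_one_sub_div_sqrtAddSq (by positivity)
    (by linarith [half_le_re_of_norm_sub_le hz]))
  calc 4 * T / ((8/A^2 + 9*π) * x^2) ≤ 2 * T / π / (9 * x ^ 2 / 2 + 3 * (2 * T / π) / 2) := by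
        rw [div_le_div_iff₀ (by positivity) (by positivity)]
        field_simp
        nlinarith [mul_le_mul_of_nonneg_left hAx (by positivity : (0:ℝ) ≤ T * π)]
    _ ≤ 2 * T / π / (2 * ‖z‖ ^ 2 + 3 * (2 * T / π) / 2) := by
        gcongr
        nlinarith [norm_nonneg z]

lemma norm_secondIntegralAmplitude_le (hα : 0 < α) (hA : 0 < A) (hT : 0 < T)
    (hx : A * √T ≤ x) (hz : ‖z - x‖ ≤ x / 2) :
    ‖secondIntegralAmplitude α T z‖ ≤
      (2:ℝ) ^ (α + 1/2) * (arsinh (A/2 * √(π/2)))⁻¹ * x ^ (-α) := by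
  have hx₀ : 0 < x := lt_of_lt_of_le (by positivity) hx
  have hre := half_le_re_of_norm_sub_le hz
  set s := √(π / (2 * T))
  have hs : 0 < s := Real.sqrt_pos.mpr (by positivity)
  have hsT : s * √T = √(π / 2) := by
    rw [← Real.sqrt_mul (by positivity)]
    congr 1
    field_simp
  have hr : 0 < arsinh (A/2 * √(π/2)) := arsinh_pos_iff.mpr (by positivity)
  have hpow : ‖z ^ (-(α:ℂ))‖ ≤ 2 ^ α * x ^ (-α) := by
    refine (Complex.norm_cpow_neg_le hα.le (half_pos hx₀)
      (hre.trans (Complex.re_le_norm z))).trans_eq ?_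
    rw [Real.div_rpow hx₀.le zero_le_two, Real.rpow_neg zero_le_two, div_eq_mul_inv, inv_inv,
      mul_comm]
  have harsinh : ‖(CArsinh (z * s))⁻¹‖ ≤ (arsinh (A/2 * √(π/2)))⁻¹ := by
    have hzs : 0 < (z * s).re := by rw [Complex.re_mul_ofReal]; exact mul_pos (by linarith) hs
    rw [norm_inv]
    refine inv_anti₀ hr (le_trans ?_ (arsinh_re_le_norm_cArsinh hzs))
    rw [arsinh_le_arsinh, Complex.re_mul_ofReal, ← hsT]
    nlinarith
  have hζ : 1/4 ≤ ((T:ℂ) / (2*π*z^2) + 1/4).re := by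
    have hre₂ : 0 ≤ (2 * π * z ^ 2 : ℂ).re := by
      rw [show (2 * π * z ^ 2 : ℂ) = ((2 * π : ℝ) : ℂ) * z ^ 2 by push_cast; ring,
        Complex.re_ofReal_mul]
      exact mul_nonneg (by positivity)
        (re_sq_pos_of_mem_rightAngleSector (mem_rightAngleSector_of_norm_sub_le hx₀ hz)).le
    rw [Complex.add_re, Complex.div_ofNat_re, Complex.one_re]
    linarith [Complex.re_ofReal_div_nonneg hT.le hre₂]
  rw [secondIntegralAmplitude, norm_mul, norm_mul, norm_mul]
  calc _ ≤ 2 ^ α * x ^ (-α) * (arsinh (A/2 * √(π/2)))⁻¹ * 1 * (2:ℝ) ^ (1/2 : ℝ) := by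
        gcongr
        exacts [Complex.norm_inv_cpow_one_half_add_half_le_one hζ,
          Complex.norm_cpow_neg_quarter_le hζ]
    _ = _ := by rw [Real.rpow_add two_pos]; ring

end bounds

/-- Bounds for the auxiliary functions `φ` and `f` of the second exponential integral,
on the disk `|z - x| ≤ x/2`, for `x ≥ A·√T`. -/
theorem second_integral_aux_bounds (α A T : ℝ)
    (hα : 0 < α) (hA : 0 < A) (hT : 0 < T)
    (x : ℝ) (hx : A * Real.sqrt T ≤ x)
    (z : ℂ) (hz : ‖z - (x : ℂ)‖ ≤ x / 2)
    (φ f : ℂ → ℂ)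
    (hφdef : φ = fun w => w ^ (-(α:ℂ)) *
      (CArsinh (w * (Real.sqrt (π / (2*T)) : ℝ)))⁻¹ *
      (((T:ℂ) / (2*π*w^2) + 1/4) ^ ((1:ℂ)/2) + 1/2)⁻¹ *
      ((T:ℂ) / (2*π*w^2) + 1/4) ^ (-(1:ℂ)/4))
    (hfdef : f = fun w => w^2/2 - ((T:ℂ)*w^2/(2*π) + w^4/4) ^ ((1:ℂ)/2) -
      ((T:ℂ)/π) * CArsinh (w * (Real.sqrt (π / (2*T)) : ℝ))) :
    ‖φ z‖ ≤ (2:ℝ) ^ (α + 1/2) * (Real.arsinh (A/2 * Real.sqrt (π/2)))⁻¹ * x ^ (-α) ∧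
    ‖deriv f z‖ ≤ 2 * T / (π * x) ∧
    4 * T / ((8/A^2 + 9*π) * x^2) ≤ ‖iteratedDeriv 2 f z‖ := by
  subst hφdef hfdef
  exact ⟨norm_secondIntegralAmplitude_le hα hA hT hx hz,
    norm_deriv_secondIntegralPhase_le hT (lt_of_lt_of_le (by positivity) hx) hz,
    le_norm_iteratedDeriv_two_secondIntegralPhase hA hT hx hz⟩
end

section
/- For every real Z ≥ 4 one has Σ_{Z−√Z < n ≤ Z+√Z} d(n)·n^{−3/4} ≤ 2^{7/4}·Z^{−1/4}·log Z + 12.21·Z^{−1/4}, where the sum ranges over positive integers n with Z − √Z < n ≤ Z + √Z. -/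
/-!
Every `n` in the window `(Z - √Z, Z + √Z]` exceeds `Z / 2`, so the weight `n^{-3/4}` is at most
`(Z / 2)^{-3/4}` and it remains to bound `∑ d(n)` over the window. Pairing `a ↔ n / a` gives
`d(n) ≤ 2 #{a ≤ m : a ∣ n}` with `m = ⌊√(Z + √Z)⌋`; exchanging the sums, each `a ≤ m` has at most
`2√Z / a + 1` multiples in the window, and `∑_{a ≤ m} 1/a ≤ log m + 0.81`. This yields
`∑ d(n) ≤ √Z (2 log Z + 6.7)`, and `6.7 · 2^{3/4} < 12.21`.
-/

open Real

/-- Number of positive divisors of `n`. -/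
def d (n : ℕ) : ℕ := n.divisors.card

open Finset

-- `harmonic m - log m` decreases (towards `γ`), and at `m = 2` it is `3 / 2 - log 2 < 0.81`.
theorem harmonic_le_log_add_of_two_le {m : ℕ} (hm : 2 ≤ m) : (harmonic m : ℝ) ≤ log m + 0.81 := by
  have hanti := strictAnti_eulerMascheroniSeq'.antitone hm
  have h2 : eulerMascheroniSeq' 2 = 3 / 2 - log 2 := by
    norm_num [eulerMascheroniSeq', harmonic]
  rw [h2] at hanti
  simp only [eulerMascheroniSeq', show m ≠ 0 by omega, if_false] at hanti
  linarith [log_two_gt_d9]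

theorem Nat.card_divisors_le_two_mul_card_filter_le {n m : ℕ} (h : n < (m + 1) ^ 2) :
    #n.divisors ≤ 2 * #{a ∈ n.divisors | a ≤ m} := by
  -- `a ↦ n / a` sends the divisors exceeding `m` injectively to those at most `m`.
  have hlarge : #{a ∈ n.divisors | ¬a ≤ m} ≤ #{a ∈ n.divisors | a ≤ m} := by
    refine card_le_card_of_injOn (n / ·) (fun a ha => ?_) fun a ha b hb hab => ?_
    · simp only [coe_filter, Set.mem_ofPred_eq, Nat.mem_divisors, not_le] at ha
      obtain ⟨⟨hdvd, hn⟩, hma⟩ := ha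
      refine mem_filter.2 ⟨Nat.mem_divisors.2 ⟨Nat.div_dvd_of_dvd hdvd, hn⟩, ?_⟩
      by_contra! hlt
      have := Nat.mul_le_mul hlt hma
      rw [Nat.div_mul_cancel hdvd] at this
      nlinarith
    · simp only [coe_filter, Set.mem_ofPred_eq, Nat.mem_divisors] at ha hb
      rw [← Nat.div_div_self ha.1.1 ha.1.2, ← Nat.div_div_self hb.1.1 hb.1.2]
      exact congrArg (n / ·) hab
  rw [← card_filter_add_card_filter_not (· ≤ m)]
  omega

theorem Nat.filter_dvd_Icc_one_eq_filter_divisors {n : ℕ} (hn : n ≠ 0) (m : ℕ) :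
    {a ∈ Icc 1 m | a ∣ n} = {a ∈ n.divisors | a ≤ m} := by
  ext a
  simp only [mem_filter, mem_Icc, Nat.mem_divisors]
  exact ⟨fun ⟨⟨_, ham⟩, han⟩ => ⟨⟨han, hn⟩, ham⟩,
    fun ⟨⟨han, _⟩, ham⟩ => ⟨⟨Nat.pos_of_dvd_of_pos han (Nat.pos_of_ne_zero hn), ham⟩, han⟩⟩

theorem Nat.card_filter_dvd_Ioc (L N a : ℕ) : #{n ∈ Ioc L N | a ∣ n} = N / a - L / a := by
  rcases le_total L N with hLN | hNL
  · rw [← Nat.Ioc_filter_dvd_card_eq_div N, ← Nat.Ioc_filter_dvd_card_eq_div L,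
      ← Ioc_union_Ioc_eq_Ioc (Nat.zero_le L) hLN, filter_union,
      card_union_of_disjoint (disjoint_filter_filter (Ioc_disjoint_Ioc_of_le le_rfl))]
    omega
  · rw [Ioc_eq_empty_of_le hNL, filter_empty, card_empty,
      Nat.sub_eq_zero_of_le (Nat.div_le_div_right hNL)]

theorem Nat.sum_card_divisors_Ioc_le (L N m : ℕ) (hN : N < (m + 1) ^ 2) :
    ∑ n ∈ Ioc L N, #n.divisors ≤ 2 * ∑ a ∈ Icc 1 m, (N / a - L / a) := by
  calc ∑ n ∈ Ioc L N, #n.divisors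
      ≤ ∑ n ∈ Ioc L N, 2 * #{a ∈ Icc 1 m | a ∣ n} := sum_le_sum fun n hn => by
        have hn0 : n ≠ 0 := (Nat.zero_le L).trans_lt (mem_Ioc.1 hn).1 |>.ne'
        rw [Nat.filter_dvd_Icc_one_eq_filter_divisors hn0]
        exact Nat.card_divisors_le_two_mul_card_filter_le ((mem_Ioc.1 hn).2.trans_lt hN)
    _ = 2 * ∑ a ∈ Icc 1 m, #{n ∈ Ioc L N | a ∣ n} := by
        rw [← mul_sum]
        exact congrArg (2 * ·) (sum_card_bipartiteAbove_eq_sum_card_bipartiteBelow _).symm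
    _ = 2 * ∑ a ∈ Icc 1 m, (N / a - L / a) := by simp only [Nat.card_filter_dvd_Ioc]

theorem Nat.floor_div_sub_floor_div_le {x y : ℝ} (hx : 0 ≤ x) (hxy : x ≤ y) {a : ℕ} (ha : 0 < a) :
    ((⌊y⌋₊ / a - ⌊x⌋₊ / a : ℕ) : ℝ) ≤ (y - x) / a + 1 := by
  have ha' : (0 : ℝ) < a := by exact_mod_cast ha
  have hmono : ⌊x⌋₊ / a ≤ ⌊y⌋₊ / a := Nat.div_le_div_right (Nat.floor_le_floor hxy)
  rw [Nat.cast_sub hmono, ← Nat.floor_div_natCast, ← Nat.floor_div_natCast, sub_div]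
  linarith [Nat.floor_le (div_nonneg (hx.trans hxy) ha'.le), Nat.lt_floor_add_one (x / a)]

theorem sum_card_divisors_Ioc_floor_le {x y : ℝ} (hx : 0 ≤ x) (hxy : x ≤ y) (hy : 4 ≤ y) :
    ∑ n ∈ Ioc ⌊x⌋₊ ⌊y⌋₊, (#n.divisors : ℝ) ≤ (y - x) * (log y + 1.62) + 2 * √y := by
  set m := ⌊√y⌋₊
  have hm_le : (m : ℝ) ≤ √y := Nat.floor_le (sqrt_nonneg y)
  have hm_two : 2 ≤ m := Nat.le_floor <| (le_sqrt' two_pos).2 (by norm_num [hy])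
  have hm_pos : (0 : ℝ) < m := by positivity
  have hy_lt : ⌊y⌋₊ < (m + 1) ^ 2 := by
    have h1 : (⌊y⌋₊ : ℝ) ≤ y := Nat.floor_le (by linarith)
    have h2 : √y < m + 1 := Nat.lt_floor_add_one _
    have h3 : y = √y ^ 2 := (sq_sqrt (by linarith)).symm
    exact_mod_cast (show (⌊y⌋₊ : ℝ) < ((m : ℝ) + 1) ^ 2 by nlinarith [sqrt_nonneg y])
  have hlog_m : log m ≤ log y / 2 := by
    rw [← log_sqrt (by linarith)]; exact log_le_log hm_pos hm_le
  calc ∑ n ∈ Ioc ⌊x⌋₊ ⌊y⌋₊, (#n.divisors : ℝ)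
      ≤ 2 * ∑ a ∈ Icc 1 m, ((⌊y⌋₊ / a - ⌊x⌋₊ / a : ℕ) : ℝ) := by
        exact_mod_cast Nat.sum_card_divisors_Ioc_le _ _ _ hy_lt
    _ ≤ 2 * ∑ a ∈ Icc 1 m, ((y - x) * (a : ℝ)⁻¹ + 1) := by
        gcongr with a ha
        rw [← div_eq_mul_inv]
        exact Nat.floor_div_sub_floor_div_le hx hxy (mem_Icc.1 ha).1
    _ = 2 * (y - x) * harmonic m + 2 * m := by
        rw [sum_add_distrib, ← mul_sum, harmonic_eq_sum_Icc]
        push_cast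
        simp only [sum_const, Nat.card_Icc, add_tsub_cancel_right, nsmul_eq_mul, mul_one]
        ring
    _ ≤ 2 * (y - x) * (log m + 0.81) + 2 * m := by
        gcongr
        exact harmonic_le_log_add_of_two_le hm_two
    _ ≤ (y - x) * (log y + 1.62) + 2 * √y := by nlinarith

theorem two_sqrt_mul_log_add_sqrt_le {Z : ℝ} (hZ : 4 ≤ Z) :
    2 * √Z * (log (Z + √Z) + 1.62) + 2 * √(Z + √Z) ≤ √Z * (2 * log Z + 6.7) := by
  have hs : 2 ≤ √Z := (le_sqrt' two_pos).2 (by norm_num [hZ])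
  have hsq : √Z ^ 2 = Z := sq_sqrt (by linarith)
  have hwindow : Z + √Z ≤ 3 / 2 * Z := by nlinarith
  have hlog : log (Z + √Z) ≤ log Z + 1 / 2 := by
    have hlog_three_halves : log (3 / 2) ≤ 1 / 2 := by
      linarith [log_le_sub_one_of_pos (show (0 : ℝ) < 3 / 2 by norm_num)]
    calc log (Z + √Z) ≤ log (3 / 2 * Z) := log_le_log (by positivity) hwindow
      _ = log (3 / 2) + log Z := log_mul (by norm_num) (by positivity)
      _ ≤ log Z + 1 / 2 := by linarith
  have hsqrt : √(Z + √Z) ≤ 1.23 * √Z := by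
    rw [show 1.23 * √Z = √((1.23 * √Z) ^ 2) from (sqrt_sq (by positivity)).symm]
    exact sqrt_le_sqrt (by nlinarith)
  nlinarith

theorem half_rpow_neg_three_quarters_mul_sqrt {Z : ℝ} (hZ : 0 < Z) :
    (Z / 2) ^ (-(3 : ℝ) / 4) * √Z = 2 ^ ((3 : ℝ) / 4) * Z ^ (-(1 : ℝ) / 4) := by
  rw [div_rpow hZ.le zero_le_two, sqrt_eq_rpow, div_mul_eq_mul_div, ← rpow_add hZ,
    div_eq_mul_inv, ← rpow_neg zero_le_two]
  norm_num
  ring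

theorem two_rpow_three_quarters_le : (2 : ℝ) ^ ((3 : ℝ) / 4) ≤ 1.69 := by
  have h : ((2 : ℝ) ^ ((3 : ℝ) / 4)) ^ (4 : ℕ) = 8 := by
    rw [← rpow_natCast, ← rpow_mul zero_le_two]; norm_num
  by_contra! hlt
  have := pow_lt_pow_left₀ hlt (by norm_num) (four_ne_zero)
  rw [h] at this
  norm_num at this

theorem Nat.filter_Icc_one_lt_eq_Ioc_floor (x : ℝ) (N : ℕ) :
    (Icc 1 N).filter (fun n : ℕ => x < n) = Ioc ⌊x⌋₊ N := by
  ext n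
  simp only [mem_filter, mem_Icc, mem_Ioc]
  constructor
  · rintro ⟨⟨hn, hnN⟩, hxn⟩
    exact ⟨(Nat.floor_lt' (by omega)).2 hxn, hnN⟩
  · rintro ⟨hxn, hnN⟩
    exact ⟨⟨by omega, hnN⟩, (Nat.floor_lt' (by omega)).1 hxn⟩

/-- Explicit bound for the divisor sum `Σ_{Z−√Z < n ≤ Z+√Z} d(n)·n^{−3/4}`. -/
theorem divisor_sum_middle_bound (Z : ℝ) (hZ : 4 ≤ Z) :
    ∑ n ∈ (Finset.Icc 1 ⌊Z + Real.sqrt Z⌋₊).filter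
        (fun n : ℕ => Z - Real.sqrt Z < (n:ℝ)),
        (d n : ℝ) * (n:ℝ) ^ (-(3:ℝ)/4)
      ≤ (2:ℝ) ^ ((7:ℝ)/4) * Z ^ (-(1:ℝ)/4) * Real.log Z + 12.21 * Z ^ (-(1:ℝ)/4) := by
  have hZ0 : 0 < Z := by linarith
  have hs : 2 ≤ √Z := (le_sqrt' two_pos).2 (by norm_num [hZ])
  have hs_half : √Z ≤ Z / 2 := by nlinarith [sq_sqrt hZ0.le]
  rw [Nat.filter_Icc_one_lt_eq_Ioc_floor]
  have hweight : ∀ n ∈ Ioc ⌊Z - √Z⌋₊ ⌊Z + √Z⌋₊,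
      (n : ℝ) ^ (-(3 : ℝ) / 4) ≤ (Z / 2) ^ (-(3 : ℝ) / 4) :=
    fun n hn => rpow_le_rpow_of_nonpos (by positivity)
      (by linarith [(Nat.floor_lt' (by grind)).1 (mem_Ioc.1 hn).1]) (by norm_num)
  have hcount := sum_card_divisors_Ioc_floor_le (x := Z - √Z) (y := Z + √Z) (by linarith)
    (by linarith) (by linarith)
  have hconst : (2 : ℝ) ^ ((7 : ℝ) / 4) = 2 * 2 ^ ((3 : ℝ) / 4) := by
    rw [show (7 : ℝ) / 4 = 1 + 3 / 4 by norm_num, rpow_add two_pos, rpow_one]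
  calc ∑ n ∈ Ioc ⌊Z - √Z⌋₊ ⌊Z + √Z⌋₊, (d n : ℝ) * (n : ℝ) ^ (-(3 : ℝ) / 4)
      ≤ ∑ n ∈ Ioc ⌊Z - √Z⌋₊ ⌊Z + √Z⌋₊, (d n : ℝ) * (Z / 2) ^ (-(3 : ℝ) / 4) :=
        sum_le_sum fun n hn => mul_le_mul_of_nonneg_left (hweight n hn) (Nat.cast_nonneg _)
    _ ≤ √Z * (2 * log Z + 6.7) * (Z / 2) ^ (-(3 : ℝ) / 4) := by
        rw [← sum_mul]
        gcongr
        rw [show Z + √Z - (Z - √Z) = 2 * √Z by ring] at hcount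
        exact hcount.trans (two_sqrt_mul_log_add_sqrt_le hZ)
    _ = 2 ^ ((3 : ℝ) / 4) * Z ^ (-(1 : ℝ) / 4) * (2 * log Z + 6.7) := by
        rw [← half_rpow_neg_three_quarters_mul_sqrt hZ0]; ring
    _ ≤ _ := by
        rw [hconst]
        have hpow_le := two_rpow_three_quarters_le
        have hZpow : 0 ≤ Z ^ (-(1 : ℝ) / 4) := by positivity
        nlinarith
end
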